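/- For every m < 1, the second derivative of the logarithm of the complete elliptic integral of the first kind is strictly positive: (ln K)''(m) > 0; that is, ln K is strictly convex on (-∞, 1). -/

import Mathlib

/-!
Write `u = 1 - mζ²` and `Mₖ(m) = ∫₀¹ ζ^{2k} u^{-(k+1/2)} dζ / √(1-ζ²)`. Differentiating under the
integral sign gives `Mₖ' = (k + 1/2) Mₖ₊₁`, so `K = M₀`, `K' = M₁/2`, `K'' = 3M₂/4`. The integrands
satisfy `(ζ² u^{-3/2})² = u^{-1/2} · ζ⁴ u^{-5/2}`, so Cauchy–Schwarz gives `M₁² ≤ M₀M₂`, whence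
`K''K - K'² = (3M₀M₂ - M₁²)/4 ≥ M₀M₂/2 > 0`.
-/

/-- The complete elliptic integral of the first kind,
`K(m) = ∫₀¹ dζ / √((1-ζ²)(1-mζ²))`, defined for `m < 1`. -/
noncomputable def ellipticK (m : ℝ) : ℝ :=
  ∫ ζ in (0:ℝ)..1, 1 / Real.sqrt ((1 - ζ ^ 2) * (1 - m * ζ ^ 2))

open MeasureTheory Real Set intervalIntegral

theorem intervalIntegral.sq_integral_le_integral_mul_integral {μ : Measure ℝ} {f g h : ℝ → ℝ}
    {a b : ℝ} (hab : a ≤ b) (hf : IntervalIntegrable f μ a b) (hg : IntervalIntegrable g μ a b)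
    (hh : IntervalIntegrable h μ a b) (hf₀ : ∀ x ∈ Icc a b, 0 ≤ f x)
    (hh₀ : ∀ x ∈ Icc a b, 0 ≤ h x) (hfgh : ∀ x ∈ Icc a b, g x ^ 2 ≤ f x * h x) :
    (∫ x in a..b, g x ∂μ) ^ 2 ≤ (∫ x in a..b, f x ∂μ) * ∫ x in a..b, h x ∂μ := by
  have hquad (s : ℝ) : 0 ≤ (∫ x in a..b, f x ∂μ) * (s * s) + (-2 * ∫ x in a..b, g x ∂μ) * s
      + ∫ x in a..b, h x ∂μ := by
    have hsplit : (∫ x in a..b, f x ∂μ) * (s * s) + (-2 * ∫ x in a..b, g x ∂μ) * s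
        + ∫ x in a..b, h x ∂μ = ∫ x in a..b, (f x * (s * s) + -2 * g x * s + h x) ∂μ := by
      rw [integral_add ((hf.mul_const _).add ((hg.const_mul _).mul_const _)) hh,
        integral_add (hf.mul_const _) ((hg.const_mul _).mul_const _), integral_mul_const,
        integral_mul_const, integral_const_mul]
    rw [hsplit]
    refine integral_nonneg hab fun x hx => ?_
    rcases (hf₀ x hx).eq_or_lt with hfx | hfx
    · have hgx : g x = 0 := pow_eq_zero_iff two_ne_zero |>.1 <|
        le_antisymm (by simpa [← hfx] using hfgh x hx) (sq_nonneg _)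
      simpa [← hfx, hgx] using hh₀ x hx
    · nlinarith [hfgh x hx, sq_nonneg (s * f x - g x)]
  have := discrim_le_zero hquad
  rw [discrim] at this
  linarith

namespace EllipticK

noncomputable def weight (ζ : ℝ) : ℝ := (√(1 - ζ ^ 2))⁻¹

noncomputable def kernel (k : ℕ) (m ζ : ℝ) : ℝ :=
  ζ ^ (2 * k) * (1 - m * ζ ^ 2) ^ (-(k + 1 / 2 : ℝ))

noncomputable def moment (k : ℕ) (m : ℝ) : ℝ := ∫ ζ in (0 : ℝ)..1, weight ζ * kernel k m ζ

lemma weight_nonneg (ζ : ℝ) : 0 ≤ weight ζ := inv_nonneg.2 (sqrt_nonneg _)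

lemma weight_pos {ζ : ℝ} (hζ : ζ ∈ Ioo (0 : ℝ) 1) : 0 < weight ζ :=
  inv_pos.2 (sqrt_pos.2 (by nlinarith [hζ.1, hζ.2]))

lemma measurable_weight : Measurable weight := by
  unfold weight; fun_prop

lemma intervalIntegrable_weight : IntervalIntegrable weight volume 0 1 := by
  unfold weight
  simp only [← sqrt_inv]
  exact Polynomial.Chebyshev.intervalIntegrable_sqrt_one_sub_sq_inv.mono_set
    (uIcc_subset_uIcc (by norm_num [mem_uIcc]) (by norm_num [mem_uIcc]))

lemma min_le_one_sub_mul_sq {b x ζ : ℝ} (hx : x ≤ b) (hζ : ζ ∈ Icc (0 : ℝ) 1) :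
    min 1 (1 - b) ≤ 1 - x * ζ ^ 2 := by
  have hζ2 : ζ ^ 2 ≤ 1 := pow_le_one₀ hζ.1 hζ.2
  rcases le_or_gt x 0 with hx0 | hx0
  · exact (min_le_left _ _).trans (by nlinarith [sq_nonneg ζ])
  · exact (min_le_right _ _).trans (by nlinarith)

lemma one_sub_mul_sq_pos {x ζ : ℝ} (hx : x < 1) (hζ : ζ ∈ Icc (0 : ℝ) 1) :
    0 < 1 - x * ζ ^ 2 :=
  (lt_min one_pos (by linarith)).trans_le (min_le_one_sub_mul_sq le_rfl hζ)

lemma kernel_nonneg (k : ℕ) {x ζ : ℝ} (hx : x < 1) (hζ : ζ ∈ Icc (0 : ℝ) 1) :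
    0 ≤ kernel k x ζ :=
  mul_nonneg (pow_nonneg hζ.1 _) (rpow_nonneg (one_sub_mul_sq_pos hx hζ).le _)

lemma kernel_pos (k : ℕ) {x ζ : ℝ} (hx : x < 1) (hζ : ζ ∈ Ioo (0 : ℝ) 1) : 0 < kernel k x ζ :=
  mul_pos (pow_pos hζ.1 _) (rpow_pos_of_pos (one_sub_mul_sq_pos hx (Ioo_subset_Icc_self hζ)) _)

lemma kernel_le (k : ℕ) {b x ζ : ℝ} (hb : b < 1) (hx : x ≤ b) (hζ : ζ ∈ Icc (0 : ℝ) 1) :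
    kernel k x ζ ≤ min 1 (1 - b) ^ (-(k + 1 / 2 : ℝ)) := by
  have hu := one_sub_mul_sq_pos (hx.trans_lt hb) hζ
  calc kernel k x ζ ≤ 1 * (1 - x * ζ ^ 2) ^ (-(k + 1 / 2 : ℝ)) :=
        mul_le_mul_of_nonneg_right (pow_le_one₀ hζ.1 hζ.2) (rpow_nonneg hu.le _)
    _ ≤ min 1 (1 - b) ^ (-(k + 1 / 2 : ℝ)) := by
        rw [one_mul]
        exact rpow_le_rpow_of_nonpos (lt_min one_pos (by linarith))
          (min_le_one_sub_mul_sq hx hζ) (by linarith)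

lemma kernel_succ_sq (k : ℕ) {x ζ : ℝ} (hx : x < 1) (hζ : ζ ∈ Icc (0 : ℝ) 1) :
    kernel (k + 1) x ζ ^ 2 = kernel k x ζ * kernel (k + 2) x ζ := by
  have hu := one_sub_mul_sq_pos hx hζ
  set u := 1 - x * ζ ^ 2
  rw [kernel, kernel, kernel, mul_pow, ← pow_mul, sq (u ^ _), mul_mul_mul_comm, ← pow_add,
    ← rpow_add hu, ← rpow_add hu]
  congr 2 <;> push_cast <;> ring

lemma hasDerivAt_kernel (k : ℕ) {x ζ : ℝ} (hu : 0 < 1 - x * ζ ^ 2) :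
    HasDerivAt (fun y => kernel k y ζ) ((k + 1 / 2) * kernel (k + 1) x ζ) x := by
  have hlin : HasDerivAt (fun y : ℝ => 1 - y * ζ ^ 2) (-ζ ^ 2) x := by
    simpa using ((hasDerivAt_id x).mul_const (ζ ^ 2)).const_sub 1
  refine ((hlin.rpow_const (p := -(k + 1 / 2 : ℝ)) (Or.inl hu.ne')).const_mul
    (ζ ^ (2 * k))).congr_deriv ?_
  rw [kernel, show -(k + 1 / 2 : ℝ) - 1 = -((k + 1 : ℕ) + 1 / 2 : ℝ) by push_cast; ring,
    mul_add, pow_add]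
  ring

lemma measurable_kernel (k : ℕ) (x : ℝ) : Measurable (kernel k x) := by
  unfold kernel; fun_prop

lemma intervalIntegrable_moment (k : ℕ) {x : ℝ} (hx : x < 1) :
    IntervalIntegrable (fun ζ => weight ζ * kernel k x ζ) volume 0 1 := by
  have hw := intervalIntegrable_weight
  rw [intervalIntegrable_iff_integrableOn_Ioc_of_le zero_le_one] at hw ⊢
  refine hw.mul_bdd (c := min 1 (1 - x) ^ (-(k + 1 / 2 : ℝ)))
    (measurable_kernel k x).aestronglyMeasurable ?_
  filter_upwards [ae_restrict_mem measurableSet_Ioc] with ζ hζ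
  rw [norm_of_nonneg (kernel_nonneg k hx (Ioc_subset_Icc_self hζ))]
  exact kernel_le k hx le_rfl (Ioc_subset_Icc_self hζ)

lemma moment_pos (k : ℕ) {x : ℝ} (hx : x < 1) : 0 < moment k x :=
  intervalIntegral_pos_of_pos_on (intervalIntegrable_moment k hx)
    (fun _ hζ => mul_pos (weight_pos hζ) (kernel_pos k hx hζ)) one_pos

lemma hasDerivAt_moment (k : ℕ) {m : ℝ} (hm : m < 1) :
    HasDerivAt (moment k) ((k + 1 / 2) * moment (k + 1) m) m := by
  obtain ⟨b, hmb, hb⟩ := exists_between hm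
  have key := hasDerivAt_integral_of_dominated_loc_of_deriv_le (μ := volume) (a := 0) (b := 1)
    (F := fun x ζ => weight ζ * kernel k x ζ)
    (F' := fun x ζ => (k + 1 / 2) * (weight ζ * kernel (k + 1) x ζ))
    (bound := fun ζ => (k + 1 / 2) * (weight ζ * min 1 (1 - b) ^ (-((k + 1 : ℕ) + 1 / 2 : ℝ))))
    (Iio_mem_nhds hmb)
    (.of_forall fun x => (measurable_weight.mul (measurable_kernel k x)).aestronglyMeasurable)
    (intervalIntegrable_moment k hm)
    ((measurable_weight.mul (measurable_kernel (k + 1) m)).const_mul _).aestronglyMeasurable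
    ?_ ((intervalIntegrable_weight.mul_const _).const_mul _) ?_
  · rw [moment, ← intervalIntegral.integral_const_mul]
    exact key.2
  all_goals
    refine .of_forall fun ζ hζ x hx => ?_
    rw [uIoc_of_le zero_le_one] at hζ
    have hζ' := Ioc_subset_Icc_self hζ
  · have := kernel_nonneg (k + 1) (hx.out.trans hb) hζ'
    rw [norm_of_nonneg (by positivity [weight_nonneg ζ])]
    gcongr
    · exact weight_nonneg ζ
    · exact kernel_le (k + 1) hb hx.out.le hζ'
  · exact (hasDerivAt_kernel k (one_sub_mul_sq_pos (hx.out.trans hb) hζ')).const_mul (weight ζ)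
      |>.congr_deriv (by ring)

lemma sq_moment_le (k : ℕ) {x : ℝ} (hx : x < 1) :
    moment (k + 1) x ^ 2 ≤ moment k x * moment (k + 2) x :=
  sq_integral_le_integral_mul_integral zero_le_one (intervalIntegrable_moment k hx)
    (intervalIntegrable_moment (k + 1) hx) (intervalIntegrable_moment (k + 2) hx)
    (fun ζ hζ => mul_nonneg (weight_nonneg ζ) (kernel_nonneg k hx hζ))
    (fun ζ hζ => mul_nonneg (weight_nonneg ζ) (kernel_nonneg (k + 2) hx hζ))
    (fun ζ hζ => by rw [mul_pow, kernel_succ_sq k hx hζ]; nlinarith [weight_nonneg ζ])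

lemma ellipticK_eq_moment_zero {x : ℝ} (hx : x < 1) : ellipticK x = moment 0 x := by
  refine integral_congr fun ζ hζ => ?_
  rw [uIcc_of_le zero_le_one] at hζ
  have h1 : 0 ≤ 1 - ζ ^ 2 := by nlinarith [hζ.1, hζ.2]
  simp only [kernel, weight]
  rw [sqrt_mul h1, one_div, mul_inv, sqrt_eq_rpow (1 - x * ζ ^ 2),
    ← rpow_neg (one_sub_mul_sq_pos hx hζ).le]
  norm_num

lemma hasDerivAt_log_ellipticK {m : ℝ} (hm : m < 1) :
    HasDerivAt (fun x => log (ellipticK x)) (moment 1 m / (2 * moment 0 m)) m := by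
  have hK : (fun x => log (ellipticK x)) =ᶠ[nhds m] fun x => log (moment 0 x) := by
    filter_upwards [Iio_mem_nhds hm] with x hx
    rw [ellipticK_eq_moment_zero hx]
  refine ((hasDerivAt_moment 0 hm).log (moment_pos 0 hm).ne').congr_of_eventuallyEq hK
    |>.congr_deriv ?_
  field_simp
  norm_num

end EllipticK

open EllipticK

theorem log_ellipticK_second_deriv_pos (m : ℝ) (hm : m < 1) :
    0 < deriv (deriv (fun x : ℝ => Real.log (ellipticK x))) m := by
  have hderiv : deriv (fun x => log (ellipticK x)) =ᶠ[nhds m]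
      fun x => moment 1 x / (2 * moment 0 x) := by
    filter_upwards [Iio_mem_nhds hm] with x hx using (hasDerivAt_log_ellipticK hx).deriv
  have hM₀ := moment_pos 0 hm
  have h : HasDerivAt (fun x => moment 1 x / (2 * moment 0 x)) _ m :=
    (hasDerivAt_moment 1 hm).div ((hasDerivAt_moment 0 hm).const_mul 2) (by positivity)
  rw [hderiv.deriv_eq, h.deriv]
  norm_num only [Nat.cast_zero, Nat.cast_one, zero_add, one_add_one_eq_two]
  exact div_pos (by nlinarith [sq_moment_le 0 hm, moment_pos 2 hm]) (by positivity)
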